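/- Let all query vectors q_i have Euclidean norm at most R, and suppose ‖k̃_j − k_j‖ ≤ d for all j. Define the true attention A_{i,j} = exp(q_i·k_j)/Σ_{k=1}^{n} exp(q_i·k_k) and the approximate attention Ā_{i,j} = exp(q_i·k̃_j)/Σ_{k=1}^{n} exp(q_i·k̃_k). Then exp(-2dR) ≤ Ā_{i,j}/A_{i,j} ≤ exp(2dR). In particular, for any ε > 1, if d ≤ ln(ε)/(2R) then 1/ε ≤ Ā_{i,j}/A_{i,j} ≤ ε. -/

import Mathlib

/-!
Perturbing every key by at most `d` moves every logit `⟪q, k⟫` by at most `d R`. A softmax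
weight `exp x_j / ∑ exp x_k` then changes by a factor at most `exp (d R)` through its numerator
and at most `exp (d R)` through its normalising sum, hence by at most `exp (2 d R)` in total;
the lower bound is the same estimate with the roles of the two key families swapped.
-/

open Real Finset

noncomputable section

namespace Attention

variable {ι : Type*} [Fintype ι]

def softmax (x : ι → ℝ) (j : ι) : ℝ :=
  exp (x j) / ∑ k, exp (x k)

lemma softmax_pos (x : ι → ℝ) (j : ι) : 0 < softmax x j :=
  div_pos (exp_pos _) (sum_pos (fun _ _ ↦ exp_pos _) ⟨j, mem_univ j⟩)

lemma sum_exp_le_exp_mul_sum_exp {x y : ι → ℝ} {δ : ℝ} (h : ∀ k, x k ≤ y k + δ) :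
    ∑ k, exp (x k) ≤ exp δ * ∑ k, exp (y k) := by
  rw [mul_sum]
  gcongr with k
  rw [← exp_add, add_comm δ]
  exact exp_le_exp.mpr (h k)

lemma softmax_div_softmax (x y : ι → ℝ) (j : ι) :
    softmax y j / softmax x j =
      exp (y j - x j) * ((∑ k, exp (x k)) / ∑ k, exp (y k)) := by
  rw [softmax, softmax, div_div_div_comm, ← exp_sub, div_eq_mul_inv, inv_div]

lemma softmax_div_softmax_le {x y : ι → ℝ} {δ : ℝ} (h : ∀ k, |y k - x k| ≤ δ) (j : ι) :
    softmax y j / softmax x j ≤ exp (2 * δ) := by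
  have hSy : 0 < ∑ k, exp (y k) := sum_pos (fun _ _ ↦ exp_pos _) ⟨j, mem_univ j⟩
  have hnum : exp (y j - x j) ≤ exp δ := exp_le_exp.mpr (abs_le.mp (h j)).2
  have hden : (∑ k, exp (x k)) / ∑ k, exp (y k) ≤ exp δ := by
    rw [div_le_iff₀ hSy]
    exact sum_exp_le_exp_mul_sum_exp fun k ↦ by linarith [(abs_le.mp (h k)).1]
  rw [softmax_div_softmax, two_mul, exp_add]
  exact mul_le_mul hnum hden (by positivity) (exp_pos δ).le

lemma exp_neg_le_softmax_div_softmax {x y : ι → ℝ} {δ : ℝ} (h : ∀ k, |y k - x k| ≤ δ)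
    (j : ι) : exp (-(2 * δ)) ≤ softmax y j / softmax x j := by
  have hswap : softmax x j / softmax y j ≤ exp (2 * δ) :=
    softmax_div_softmax_le (fun k ↦ abs_sub_comm (y k) (x k) ▸ h k) j
  rw [exp_neg, ← inv_div]
  exact inv_anti₀ (div_pos (softmax_pos x j) (softmax_pos y j)) hswap

end Attention

lemma abs_inner_sub_inner_le {E : Type*} [NormedAddCommGroup E] [InnerProductSpace ℝ E]
    {q x y : E} {R d : ℝ} (hq : ‖q‖ ≤ R) (hxy : ‖x - y‖ ≤ d) :
    |inner ℝ q x - inner ℝ q y| ≤ d * R := by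
  rw [← inner_sub_right, mul_comm d]
  exact (abs_real_inner_le_norm q (x - y)).trans
    (mul_le_mul hq hxy (norm_nonneg _) ((norm_nonneg q).trans hq))

end

open Attention in
theorem attention_ratio_error_bound_general
    (m n dk : ℕ) (R d : ℝ) (hR : 0 < R)
    (q : Fin m → EuclideanSpace ℝ (Fin dk))
    (k ktil : Fin n → EuclideanSpace ℝ (Fin dk))
    (hq : ∀ i : Fin m, ‖q i‖ ≤ R)
    (hk : ∀ j : Fin n, ‖ktil j - k j‖ ≤ d)
    (A Abar : Fin m → Fin n → ℝ)
    (hA : ∀ i j, A i j = Real.exp (inner ℝ (q i) (k j) : ℝ) /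
      ∑ k' : Fin n, Real.exp (inner ℝ (q i) (k k') : ℝ))
    (hAbar : ∀ i j, Abar i j = Real.exp (inner ℝ (q i) (ktil j) : ℝ) /
      ∑ k' : Fin n, Real.exp (inner ℝ (q i) (ktil k') : ℝ))
    (i : Fin m) (j : Fin n) :
    (Real.exp (-(2 * d * R)) ≤ Abar i j / A i j ∧
      Abar i j / A i j ≤ Real.exp (2 * d * R)) ∧
    (∀ ε : ℝ, 1 < ε → d ≤ Real.log ε / (2 * R) →
      1 / ε ≤ Abar i j / A i j ∧ Abar i j / A i j ≤ ε) := by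
  have hratio : Abar i j / A i j = softmax (fun k' ↦ inner ℝ (q i) (ktil k')) j /
      softmax (fun k' ↦ inner ℝ (q i) (k k')) j := by
    rw [hA, hAbar, softmax, softmax]
  have hlogits (k' : Fin n) : |inner ℝ (q i) (ktil k') - inner ℝ (q i) (k k')| ≤ d * R :=
    abs_inner_sub_inner_le (hq i) (hk k')
  have hlower := exp_neg_le_softmax_div_softmax hlogits j
  have hupper := softmax_div_softmax_le hlogits j
  rw [← mul_assoc, ← hratio] at hlower hupper
  refine ⟨⟨hlower, hupper⟩, fun ε hε hdε ↦ ?_⟩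
  have hε₀ : 0 < ε := one_pos.trans hε
  have hlog : 2 * d * R ≤ log ε := by
    rw [le_div_iff₀ (by positivity)] at hdε
    linarith
  constructor
  · calc 1 / ε = exp (-log ε) := by rw [exp_neg, exp_log hε₀, one_div]
      _ ≤ Abar i j / A i j := (exp_le_exp.mpr (neg_le_neg hlog)).trans hlower
  · calc Abar i j / A i j ≤ exp (log ε) := hupper.trans (exp_le_exp.mpr hlog)
      _ = ε := exp_log hε₀

/-- Error bound of the approximate (group) attention matrix. -/
theorem attention_ratio_error_bound
    (m n dk : ℕ) (hn : 1 ≤ n) (R d : ℝ) (hR : 0 < R) (hd : 0 ≤ d)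
    (q : Fin m → EuclideanSpace ℝ (Fin dk))
    (k ktil : Fin n → EuclideanSpace ℝ (Fin dk))
    (hq : ∀ i : Fin m, ‖q i‖ ≤ R)
    (hk : ∀ j : Fin n, ‖ktil j - k j‖ ≤ d)
    (A Abar : Fin m → Fin n → ℝ)
    (hA : ∀ i j, A i j = Real.exp (inner ℝ (q i) (k j) : ℝ) /
      ∑ k' : Fin n, Real.exp (inner ℝ (q i) (k k') : ℝ))
    (hAbar : ∀ i j, Abar i j = Real.exp (inner ℝ (q i) (ktil j) : ℝ) /
      ∑ k' : Fin n, Real.exp (inner ℝ (q i) (ktil k') : ℝ))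
    (i : Fin m) (j : Fin n) :
    (Real.exp (-(2 * d * R)) ≤ Abar i j / A i j ∧
      Abar i j / A i j ≤ Real.exp (2 * d * R)) ∧
    (∀ ε : ℝ, 1 < ε → d ≤ Real.log ε / (2 * R) →
      1 / ε ≤ Abar i j / A i j ∧ Abar i j / A i j ≤ ε) :=
  attention_ratio_error_bound_general m n dk R d hR q k ktil hq hk A Abar hA hAbar i j
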